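/- Let S be an infinite set of monic polynomials in R = 𝔽_q[x] and let m, n, k ∈ ℕ. If A/B and P/Q are two distinct elements of F^m_{k,S} with ‖A/B − P/Q‖ < q^{−n}, then 2k > n. Consequently, for every k ≤ n/2, the balls B(x, q^{−(n+1)}) for x ∈ F^m_{k,S} are pairwise disjoint, and the number of distinct balls among {B(x, q^{−(n+1)}) : x ∈ F^m_{k,S}} equals #F^m_{k,S}. -/

import Mathlib

open Polynomial MeasureTheory
open scoped Classical ENNReal NNReal

/- Setting: `Fq` is a finite field with `q` elements (`q` a prime power),
`R = Fq[x]`, and `K_∞ = Fq((x⁻¹))` is realized as the field `LaurentSeries Fq`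
of formal Laurent series in the variable `u = x⁻¹`. -/

variable (Fq : Type) [Field Fq] [Fintype Fq] [DecidableEq Fq]

/-- `K_∞ = 𝔽_q((x⁻¹))`, realized as Laurent series in the variable `u = x⁻¹`. -/
abbrev Kinf := LaurentSeries Fq

/-- The embedding of `R = 𝔽_q[x]` into `K_∞`, sending `x` to `u⁻¹`. -/
noncomputable def emb : Polynomial Fq →+* Kinf Fq :=
  (Polynomial.aeval ((HahnSeries.single (-1 : ℤ) (1 : Fq)) : LaurentSeries Fq)).toRingHom

/-- `q`, as a nonnegative real number. -/
noncomputable def qc : NNReal := (Fintype.card Fq : NNReal)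

/-- The absolute value `|α| = q^{-ord(α)}` on `K_∞` (so that `|f| = q^{deg f}` for a nonzero
polynomial `f ∈ 𝔽_q[x]`, since `f(u⁻¹)` has order `-deg f` as a Laurent series in `u`). -/
noncomputable def fabs (α : Kinf Fq) : NNReal :=
  if α = 0 then 0 else (qc Fq) ^ (-(HahnSeries.order α))

/-- The sup norm `‖v‖ = max_i |v_i|` on `K_∞^m`. -/
noncomputable def vnorm {m : ℕ} (v : Fin m → Kinf Fq) : NNReal :=
  Finset.univ.sup fun i => fabs Fq (v i)

/-- The maximal ideal `𝔪 = {α ∈ K_∞ : |α| ≤ q⁻¹}`. -/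
noncomputable def mfrak : Set (Kinf Fq) := {α | fabs Fq α ≤ (qc Fq)⁻¹}

/-- `𝔪^m ⊆ K_∞^m`. -/
noncomputable def mfrakV (m : ℕ) : Set (Fin m → Kinf Fq) := {α | ∀ i, α i ∈ mfrak Fq}

/-- `(P, Q)` is a primitive vector of `R^{m+1}`, i.e. `gcd(P₁, …, P_m, Q) = 1`:
every common divisor is a unit. -/
def Primitive {m : ℕ} (P : Fin m → Polynomial Fq) (Q : Polynomial Fq) : Prop :=
  ∀ d : Polynomial Fq, d ∣ Q → (∀ i, d ∣ P i) → IsUnit d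

/-- The point `P/Q ∈ K_∞^m` determined by `P ∈ R^m` and `Q ∈ R`. -/
noncomputable def ratV {m : ℕ} (P : Fin m → Polynomial Fq) (Q : Polynomial Fq) :
    Fin m → Kinf Fq := fun i => emb Fq (P i) / emb Fq Q

/-- `deg_{min,S}(α, q^{-n})`: the least `d` such that there is `(P,Q) ∈ R̂^{m+1}` with
`Q ∈ S`, `deg Q = d`, `‖P‖ < |Q|` and `‖α - P/Q‖ < q^{-n}`. -/
noncomputable def degMin (S : Set (Polynomial Fq)) (m n : ℕ) (α : Fin m → Kinf Fq) : ℕ :=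
  sInf {d : ℕ | ∃ (P : Fin m → Polynomial Fq) (Q : Polynomial Fq),
    Q ∈ S ∧ Q.natDegree = d ∧ Primitive Fq P Q ∧
    vnorm Fq (ratV Fq P 1) < fabs Fq (emb Fq Q) ∧
    vnorm Fq (α - ratV Fq P Q) < (qc Fq) ^ (-(n : ℤ))}

/-- `m_S(n) = min {k ≥ n : S ∩ R_{=k} ≠ ∅}`. -/
noncomputable def mS (S : Set (Polynomial Fq)) (n : ℕ) : ℕ :=
  sInf {k : ℕ | n ≤ k ∧ ∃ Q ∈ S, Q.natDegree = k}

/-- `d_{N,S}(a) = deg_{min,S}(a/N, q^{-deg N})`. -/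
noncomputable def dN (S : Set (Polynomial Fq)) (m : ℕ) (N : Polynomial Fq)
    (a : Fin m → Polynomial Fq) : ℕ :=
  degMin Fq S m N.natDegree (ratV Fq a N)

/-- `R_{<n}^m`, the set of vectors of polynomials of degree `< n`. -/
def polyVecLT (m n : ℕ) : Set (Fin m → Polynomial Fq) :=
  {a | ∀ i, (a i).degree < (n : ℕ)}

/-- The `S`-Farey fractions of degree at most `k` in `K_∞^m` (the zero vector is
included, as the fraction `0/1`). -/
noncomputable def Farey (S : Set (Polynomial Fq)) (m k : ℕ) : Set (Fin m → Kinf Fq) :=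
  {x | ∃ (P : Fin m → Polynomial Fq) (Q : Polynomial Fq), Q ∈ S ∧ Primitive Fq P Q ∧
    vnorm Fq (ratV Fq P 1) < fabs Fq (emb Fq Q) ∧ Q.natDegree ≤ k ∧ x = ratV Fq P Q}

/-- The (closed) ball `B(v, r) = {u ∈ K_∞^m : ‖v - u‖ ≤ r}`. -/
noncomputable def ball {m : ℕ} (v : Fin m → Kinf Fq) (r : NNReal) : Set (Fin m → Kinf Fq) :=
  {u | vnorm Fq (v - u) ≤ r}

/-- `Q` is the (unique monic) `S`-minimal denominator for `(α, q^{-n})`, i.e.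
`Q_{min,S}(α, q^{-n}) = Q`: `Q ∈ S`, `deg Q = deg_{min,S}(α, q^{-n})`, and there is
`P ∈ R^m` with `(P,Q) ∈ R̂^{m+1}` and `‖α - P/Q‖ < q^{-n}`. -/
noncomputable def IsMinDenom (S : Set (Polynomial Fq)) (m n : ℕ) (α : Fin m → Kinf Fq)
    (Q : Polynomial Fq) : Prop :=
  Q ∈ S ∧ Q.natDegree = degMin Fq S m n α ∧
    ∃ P : Fin m → Polynomial Fq, Primitive Fq P Q ∧
      vnorm Fq (α - ratV Fq P Q) < (qc Fq) ^ (-(n : ℤ))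

/-! If `A/B ≠ P/Q`, some coordinate of the difference equals `N / (BQ)` with `N` a nonzero
polynomial, so its absolute value is at least `|BQ|⁻¹ ≥ q^{-2k}`. Hence for `2k ≤ n` distinct
Farey fractions are more than `q^{-(n+1)}` apart, and by the ultrametric inequality the balls
of that radius around them are disjoint, in particular pairwise distinct. -/

section Embedding

variable {Fq : Type} [Field Fq]

lemma emb_eq_sum_single (f : Fq[X]) :
    emb Fq f = ∑ i ∈ Finset.range (f.natDegree + 1), HahnSeries.single (-(i : ℤ)) (f.coeff i) := by
  rw [emb]
  simp only [AlgHom.toRingHom_eq_coe, RingHom.coe_coe, aeval_eq_sum_range]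
  refine Finset.sum_congr rfl fun i _ => ?_
  rw [Algebra.smul_def, HahnSeries.single_pow, one_pow, HahnSeries.algebraMap_apply',
    ← PowerSeries.C_eq_algebraMap, HahnSeries.ofPowerSeries_C, HahnSeries.C_apply,
    HahnSeries.single_mul_single]
  simp

lemma coeff_emb_neg_natCast (f : Fq[X]) (i : ℕ) : (emb Fq f).coeff (-(i : ℤ)) = f.coeff i := by
  rw [emb_eq_sum_single, HahnSeries.coeff_sum]
  simp only [HahnSeries.coeff_single, neg_inj, Nat.cast_inj, Finset.sum_ite_eq,
    Finset.mem_range]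
  split_ifs with hi
  · rfl
  · exact (coeff_eq_zero_of_natDegree_lt (by omega)).symm

lemma emb_ne_zero {f : Fq[X]} (hf : f ≠ 0) : emb Fq f ≠ 0 := by
  intro h
  have hlead := coeff_emb_neg_natCast f f.natDegree
  rw [h, HahnSeries.coeff_zero] at hlead
  exact leadingCoeff_ne_zero.mpr hf hlead.symm

lemma order_emb {f : Fq[X]} (hf : f ≠ 0) : (emb Fq f).order = -(f.natDegree : ℤ) := by
  refine le_antisymm (HahnSeries.order_le_of_coeff_ne_zero ?_) ?_
  · rw [coeff_emb_neg_natCast]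
    exact leadingCoeff_ne_zero.mpr hf
  · refine (HahnSeries.le_order_iff_forall (emb_ne_zero hf)).mpr fun j hj => ?_
    obtain ⟨i, rfl⟩ : ∃ i : ℕ, j = -(i : ℤ) := ⟨j.natAbs, by omega⟩
    rw [coeff_emb_neg_natCast]
    exact coeff_eq_zero_of_natDegree_lt (by omega)

end Embedding

section AbsoluteValue

variable {Fq : Type} [Field Fq] [Fintype Fq]

lemma one_lt_qc : 1 < qc Fq := by
  rw [qc]
  exact_mod_cast Fintype.one_lt_card

lemma qc_pos : 0 < qc Fq :=
  zero_lt_one.trans one_lt_qc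

lemma qc_zpow_strictMono : StrictMono fun z : ℤ => qc Fq ^ z :=
  zpow_right_strictMono₀ one_lt_qc

lemma fabs_emb {f : Fq[X]} (hf : f ≠ 0) : fabs Fq (emb Fq f) = qc Fq ^ (f.natDegree : ℤ) := by
  rw [fabs, if_neg (emb_ne_zero hf), order_emb hf, neg_neg]

lemma fabs_mul (α β : Kinf Fq) : fabs Fq (α * β) = fabs Fq α * fabs Fq β := by
  by_cases hα : α = 0
  · simp [hα, fabs]
  by_cases hβ : β = 0
  · simp [hβ, fabs]
  rw [fabs, fabs, fabs, if_neg hα, if_neg hβ, if_neg (mul_ne_zero hα hβ),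
    HahnSeries.order_mul hα hβ, neg_add, zpow_add₀ qc_pos.ne']

lemma fabs_add_le_max (α β : Kinf Fq) : fabs Fq (α + β) ≤ max (fabs Fq α) (fabs Fq β) := by
  by_cases hα : α = 0
  · simp [hα]
  by_cases hβ : β = 0
  · simp [hβ]
  by_cases hαβ : α + β = 0
  · simp [hαβ, fabs]
  rw [fabs, fabs, fabs, if_neg hα, if_neg hβ, if_neg hαβ, ← qc_zpow_strictMono.monotone.map_max,
    ← neg_inf]
  exact qc_zpow_strictMono.monotone (neg_le_neg (HahnSeries.min_order_le_order_add hαβ))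

lemma fabs_neg (α : Kinf Fq) : fabs Fq (-α) = fabs Fq α := by
  simp only [fabs, neg_eq_zero, HahnSeries.order_neg]

lemma le_vnorm {m : ℕ} (v : Fin m → Kinf Fq) (i : Fin m) : fabs Fq (v i) ≤ vnorm Fq v :=
  Finset.le_sup (f := fun i => fabs Fq (v i)) (Finset.mem_univ i)

lemma vnorm_sub_le_max {m : ℕ} (x y z : Fin m → Kinf Fq) :
    vnorm Fq (x - y) ≤ max (vnorm Fq (x - z)) (vnorm Fq (y - z)) := by
  refine Finset.sup_le fun i _ => ?_
  have hsplit : (x - y) i = (x - z) i + -(y - z) i := by simp only [Pi.sub_apply]; ring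
  rw [hsplit]
  refine (fabs_add_le_max _ _).trans ?_
  rw [fabs_neg]
  exact max_le_max (le_vnorm _ i) (le_vnorm _ i)

end AbsoluteValue

section Spacing

variable {Fq : Type} [Field Fq] [Fintype Fq]

lemma zpow_neg_natDegree_add_le_fabs_div_sub_div {A B P Q : Fq[X]} (hB : B ≠ 0) (hQ : Q ≠ 0)
    (hne : emb Fq A / emb Fq B ≠ emb Fq P / emb Fq Q) :
    qc Fq ^ (-(B.natDegree + Q.natDegree : ℤ)) ≤
      fabs Fq (emb Fq A / emb Fq B - emb Fq P / emb Fq Q) := by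
  set d := emb Fq A / emb Fq B - emb Fq P / emb Fq Q
  have hBQ : B * Q ≠ 0 := mul_ne_zero hB hQ
  have hd : d * emb Fq (B * Q) = emb Fq (A * Q - P * B) := by
    have hB' := emb_ne_zero hB
    have hQ' := emb_ne_zero hQ
    simp only [d, map_mul, map_sub]
    field_simp
  have hN : A * Q - P * B ≠ 0 := by
    rintro hN
    rw [hN, map_zero, mul_eq_zero] at hd
    exact hd.elim (sub_ne_zero.mpr hne) (emb_ne_zero hBQ)
  have habs := congrArg (fabs Fq) hd
  rw [fabs_mul, fabs_emb hBQ, fabs_emb hN, natDegree_mul hB hQ] at habs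
  rw [eq_div_of_mul_eq (zpow_pos qc_pos _).ne' habs,
    ← zpow_sub₀ qc_pos.ne']
  exact qc_zpow_strictMono.monotone (by push_cast; omega)

lemma ne_zero_of_vnorm_lt_fabs_emb {m : ℕ} {P : Fin m → Fq[X]} {Q : Fq[X]}
    (h : vnorm Fq (ratV Fq P 1) < fabs Fq (emb Fq Q)) : Q ≠ 0 := by
  rintro rfl
  simp [fabs] at h

lemma zpow_neg_two_mul_le_vnorm_sub_of_mem_Farey {S : Set Fq[X]} {m k : ℕ}
    {x y : Fin m → Kinf Fq} (hx : x ∈ Farey Fq S m k) (hy : y ∈ Farey Fq S m k) (hxy : x ≠ y) :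
    qc Fq ^ (-(2 * k : ℤ)) ≤ vnorm Fq (x - y) := by
  obtain ⟨A, B, -, -, hB, hBk, rfl⟩ := hx
  obtain ⟨P, Q, -, -, hQ, hQk, rfl⟩ := hy
  obtain ⟨i, hi⟩ := Function.ne_iff.mp hxy
  calc qc Fq ^ (-(2 * k : ℤ))
      ≤ qc Fq ^ (-(B.natDegree + Q.natDegree : ℤ)) := qc_zpow_strictMono.monotone (by omega)
    _ ≤ fabs Fq ((ratV Fq A B - ratV Fq P Q) i) :=
      zpow_neg_natDegree_add_le_fabs_div_sub_div (ne_zero_of_vnorm_lt_fabs_emb hB)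
        (ne_zero_of_vnorm_lt_fabs_emb hQ) hi
    _ ≤ vnorm Fq (ratV Fq A B - ratV Fq P Q) := le_vnorm _ i

end Spacing

section Balls

variable {Fq : Type} [Field Fq] [Fintype Fq] {m : ℕ}

lemma mem_ball_self (x : Fin m → Kinf Fq) (r : ℝ≥0) : x ∈ ball Fq x r := by
  simp [ball, vnorm, fabs]

lemma disjoint_ball_of_lt_vnorm_sub {x y : Fin m → Kinf Fq} {r : ℝ≥0}
    (h : r < vnorm Fq (x - y)) : Disjoint (ball Fq x r) (ball Fq y r) :=
  Set.disjoint_left.mpr fun _ hzx hzy =>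
    h.not_ge ((vnorm_sub_le_max x y _).trans (max_le hzx hzy))

end Balls

theorem stmt10 (S : Set (Polynomial Fq)) (m n k : ℕ) :
    (∀ x ∈ Farey Fq S m k, ∀ y ∈ Farey Fq S m k, x ≠ y →
      vnorm Fq (x - y) < (qc Fq) ^ (-(n : ℤ)) → n < 2 * k) ∧
    (2 * k ≤ n →
      ((Farey Fq S m k).Pairwise fun x y =>
          Disjoint (ball Fq x ((qc Fq) ^ (-(n + 1 : ℤ)))) (ball Fq y ((qc Fq) ^ (-(n + 1 : ℤ))))) ∧
        Set.ncard ((fun x => ball Fq x ((qc Fq) ^ (-(n + 1 : ℤ)))) '' Farey Fq S m k)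
          = (Farey Fq S m k).ncard) := by
  refine ⟨fun x hx y hy hxy hlt => ?_, fun hkn => ?_⟩
  · have := qc_zpow_strictMono.lt_iff_lt.mp
      ((zpow_neg_two_mul_le_vnorm_sub_of_mem_Farey hx hy hxy).trans_lt hlt)
    omega
  · have hdisj : (Farey Fq S m k).Pairwise fun x y =>
        Disjoint (ball Fq x ((qc Fq) ^ (-(n + 1 : ℤ)))) (ball Fq y ((qc Fq) ^ (-(n + 1 : ℤ)))) :=
      fun x hx y hy hxy => disjoint_ball_of_lt_vnorm_sub <| (qc_zpow_strictMono (by omega)).trans_le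
        (zpow_neg_two_mul_le_vnorm_sub_of_mem_Farey hx hy hxy)
    refine ⟨hdisj, Set.InjOn.ncard_image (Set.injOn_iff_pairwise_ne.mpr ?_)⟩
    exact hdisj.imp fun x y h => h.ne (Set.nonempty_of_mem (mem_ball_self x _)).ne_empty
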